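/- arXiv:1401.0020 — 2 statements merged into one kernel-verified Lean document; each statement's English description precedes it below -/
import Mathlib

section
/- Uniqueness of the class-P solution to the HJB equation: suppose V°, V̂ ∈ P both satisfy the HJB equation H(V)(x) = 0 for all x ∈ R^n, where H(V) = ∇Vᵀf + q - (1/4)∇Vᵀg R⁻¹ gᵀ∇V. Assume each induced closed-loop system (with feedback -(1/2)R⁻¹gᵀ∇V) is globally asymptotically stable and each function equals the cost of its induced policy. Then V° = V̂ on R^n. -/
/-!
If `U` solves `H(U) = 0`, completing the square in the control gives, along any trajectory of
`ẋ = f(x) + g(x) u(t)`,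
`d/dt U(x t) = -(q(x) + uᵀ R u) + |u + ½ R⁻¹ gᵀ ∇U|²_R ≥ -(q(x) + uᵀ R u)`.
Integrating over `[0, T]` and letting `T → ∞` (so `x T → 0` and `U (x T) → U 0 = 0`) bounds
`U (x 0)` by the cost of `u`. Taking for `u` the feedback induced by the other solution, whose
cost is that other solution, gives `V° ≤ V̂` and `V̂ ≤ V°`.
-/

open Matrix Filter MeasureTheory

/-- The gradient of `V : ℝⁿ → ℝ` at `y`, as a vector. -/
noncomputable def grad {n : ℕ} (V : (Fin n → ℝ) → ℝ) (y : Fin n → ℝ) : Fin n → ℝ :=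
  fun i => fderiv ℝ V y (Pi.single i 1)

/-- The origin is a globally asymptotically stable equilibrium of `ẋ = F(x)`. -/
def GloballyAsymptoticallyStable {n : ℕ} (F : (Fin n → ℝ) → (Fin n → ℝ)) : Prop :=
  (∀ ε > (0:ℝ), ∃ δ > (0:ℝ), ∀ x : ℝ → (Fin n → ℝ),
      (∀ t, HasDerivAt x (F (x t)) t) → ‖x 0‖ < δ → ∀ t ≥ (0:ℝ), ‖x t‖ < ε) ∧
  (∀ x : ℝ → (Fin n → ℝ), (∀ t, HasDerivAt x (F (x t)) t) →
      Tendsto x atTop (nhds 0))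

open Set Topology

theorem fderiv_apply_eq_grad_dotProduct {n : ℕ} (U : (Fin n → ℝ) → ℝ) (y v : Fin n → ℝ) :
    fderiv ℝ U y v = grad U y ⬝ᵥ v := by
  conv_lhs => rw [← Finset.univ_sum_single v]
  have hsingle : ∀ i, (Pi.single i (v i) : Fin n → ℝ) = v i • Pi.single i 1 := fun i => by
    rw [← Pi.single_smul', smul_eq_mul, mul_one]
  simp only [map_sum, hsingle, map_smul, smul_eq_mul, grad, dotProduct, mul_comm]

section CompletingTheSquare

variable {ι κ : Type*} [Fintype ι] [DecidableEq ι] [Fintype κ]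

theorem quadForm_add_half_inv_mulVec {R : Matrix ι ι ℝ} (hRT : Rᵀ = R) (hR : IsUnit R.det)
    (w u : ι → ℝ) :
    (u + (1/2 : ℝ) • (R⁻¹ *ᵥ w)) ⬝ᵥ (R *ᵥ (u + (1/2 : ℝ) • (R⁻¹ *ᵥ w)))
      = u ⬝ᵥ (R *ᵥ u) + w ⬝ᵥ u + (1/4) * (w ⬝ᵥ (R⁻¹ *ᵥ w)) := by
  have hRRinv : R *ᵥ (R⁻¹ *ᵥ w) = w := by rw [mulVec_mulVec, mul_nonsing_inv R hR, one_mulVec]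
  have hsymm : ∀ z, (R⁻¹ *ᵥ w) ⬝ᵥ (R *ᵥ z) = w ⬝ᵥ z := fun z => by
    rw [dotProduct_mulVec, ← mulVec_transpose, hRT, hRRinv]
  simp only [mulVec_add, mulVec_smul, hRRinv, add_dotProduct, dotProduct_add,
    smul_dotProduct, dotProduct_smul, hsymm, smul_eq_mul, dotProduct_comm u w,
    dotProduct_comm (R⁻¹ *ᵥ w) w]
  ring

theorem neg_add_quadForm_le_of_hjb {R : Matrix ι ι ℝ} (hR : R.PosDef) (p fv : κ → ℝ)
    (G : Matrix κ ι ℝ) (c : ℝ)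
    (hHJB : p ⬝ᵥ fv + c - (1/4) * (p ⬝ᵥ (G *ᵥ (R⁻¹ *ᵥ (Gᵀ *ᵥ p)))) = 0) (u : ι → ℝ) :
    -(c + u ⬝ᵥ (R *ᵥ u)) ≤ p ⬝ᵥ (fv + G *ᵥ u) := by
  have hRT : Rᵀ = R := (conjTranspose_eq_transpose_of_trivial R).symm.trans hR.isHermitian
  have hG : ∀ z, p ⬝ᵥ (G *ᵥ z) = (Gᵀ *ᵥ p) ⬝ᵥ z := fun z => by
    rw [dotProduct_mulVec, ← mulVec_transpose]
  have hsq := quadForm_add_half_inv_mulVec hRT ((isUnit_iff_isUnit_det R).mp hR.isUnit)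
    (Gᵀ *ᵥ p) u
  have hnonneg := hR.posSemidef.dotProduct_mulVec_nonneg (u + (1/2 : ℝ) • (R⁻¹ *ᵥ (Gᵀ *ᵥ p)))
  rw [star_trivial] at hnonneg
  rw [dotProduct_add, hG]
  rw [hG] at hHJB
  linarith

end CompletingTheSquare

theorem le_setIntegral_Ioi_of_hasDerivAt {φ φ' h : ℝ → ℝ}
    (hφ : ∀ t, HasDerivAt φ (φ' t) t) (hφ' : ∀ t, -h t ≤ φ' t) (hh : ∀ t, 0 ≤ h t)
    (hint : IntegrableOn h (Ioi 0)) (hlim : Tendsto φ atTop (𝓝 0)) :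
    φ 0 ≤ ∫ t in Ioi 0, h t := by
  have hT : ∀ T ≥ (0 : ℝ), φ 0 - φ T ≤ ∫ t in Ioi 0, h t := fun T hT => calc
    φ 0 - φ T = -φ T - -φ 0 := by ring
    _ ≤ ∫ t in 0..T, h t :=
      intervalIntegral.sub_le_integral_of_hasDeriv_right_of_le hT
        (fun t _ => (hφ t).continuousAt.neg.continuousWithinAt)
        (fun t _ => (hφ t).neg.hasDerivWithinAt)
        ((integrableOn_Icc_iff_integrableOn_Ioc).mpr (hint.mono_set Ioc_subset_Ioi_self))
        (fun t _ => neg_le.mp (hφ' t))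
    _ ≤ ∫ t in Ioi 0, h t := by
      rw [intervalIntegral.integral_of_le hT]
      exact setIntegral_mono_set hint (ae_of_all _ hh) Ioc_subset_Ioi_self.eventuallyLE
  have hlim' : Tendsto (fun T => φ 0 - φ T) atTop (𝓝 (φ 0 - 0)) := hlim.const_sub _
  rw [sub_zero] at hlim'
  exact le_of_tendsto hlim' (eventually_ge_atTop 0 |>.mono hT)

section Verification

variable {n m : ℕ} (f : (Fin n → ℝ) → (Fin n → ℝ)) (g : (Fin n → ℝ) → Matrix (Fin n) (Fin m) ℝ)
  {R : Matrix (Fin m) (Fin m) ℝ} (q : (Fin n → ℝ) → ℝ) {U : (Fin n → ℝ) → ℝ}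

theorem le_integral_cost_of_hjb (hR : R.PosDef) (hq : ∀ y, 0 ≤ q y)
    (hU : Differentiable ℝ U) (hU0 : U 0 = 0)
    (hHJB : ∀ y, grad U y ⬝ᵥ f y + q y
      - (1/4) * (grad U y ⬝ᵥ (g y *ᵥ (R⁻¹ *ᵥ ((g y)ᵀ *ᵥ grad U y)))) = 0)
    {u : ℝ → Fin m → ℝ} {x : ℝ → Fin n → ℝ}
    (hx : ∀ t, HasDerivAt x (f (x t) + g (x t) *ᵥ u t) t) (hxlim : Tendsto x atTop (𝓝 0))
    (hint : IntegrableOn (fun t => q (x t) + u t ⬝ᵥ (R *ᵥ u t)) (Ioi 0)) :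
    U (x 0) ≤ ∫ t in Ioi 0, (q (x t) + u t ⬝ᵥ (R *ᵥ u t)) := by
  have hUx : ∀ t, HasDerivAt (U ∘ x)
      (grad U (x t) ⬝ᵥ (f (x t) + g (x t) *ᵥ u t)) t := fun t => by
    rw [← fderiv_apply_eq_grad_dotProduct]
    exact (hU (x t)).hasFDerivAt.comp_hasDerivAt t (hx t)
  have hlim : Tendsto (U ∘ x) atTop (𝓝 0) := hU0 ▸ (hU.continuous.tendsto 0).comp hxlim
  exact le_setIntegral_Ioi_of_hasDerivAt hUx
    (fun t => neg_add_quadForm_le_of_hjb hR _ _ _ _ (hHJB (x t)) (u t))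
    (fun t => add_nonneg (hq _) (hR.posSemidef.dotProduct_mulVec_nonneg (u t))) hint hlim

theorem le_of_hjb_of_eq_integral_cost (hR : R.PosDef) (hq : ∀ y, 0 ≤ q y)
    (hU : Differentiable ℝ U) (hU0 : U 0 = 0)
    (hHJB : ∀ y, grad U y ⬝ᵥ f y + q y
      - (1/4) * (grad U y ⬝ᵥ (g y *ᵥ (R⁻¹ *ᵥ ((g y)ᵀ *ᵥ grad U y)))) = 0)
    {W : (Fin n → ℝ) → ℝ} (hWpos : ∀ y ≠ 0, 0 < W y)
    {u : ℝ → Fin m → ℝ} {x : ℝ → Fin n → ℝ}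
    (hx : ∀ t, HasDerivAt x (f (x t) + g (x t) *ᵥ u t) t) (hxlim : Tendsto x atTop (𝓝 0))
    (hWx : W (x 0) = ∫ t in Ioi 0, (q (x t) + u t ⬝ᵥ (R *ᵥ u t))) :
    U (x 0) ≤ W (x 0) := by
  by_cases hint : IntegrableOn (fun t => q (x t) + u t ⬝ᵥ (R *ᵥ u t)) (Ioi 0)
  · exact hWx ▸ le_integral_cost_of_hjb f g q hR hq hU hU0 hHJB hx hxlim hint
  · -- a non-integrable cost has Bochner integral `0`, which only the origin can have as value
    rw [integral_undef hint] at hWx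
    obtain hx0 | hx0 := eq_or_ne (x 0) 0
    · rw [hx0] at hWx ⊢
      rw [hU0, hWx]
    · exact absurd hWx (hWpos _ hx0).ne'

end Verification

theorem hjb_class_P_solution_unique_general {n m : ℕ}
    (f : (Fin n → ℝ) → (Fin n → ℝ))
    (g : (Fin n → ℝ) → Matrix (Fin n) (Fin m) ℝ)
    (R : Matrix (Fin m) (Fin m) ℝ) (hRpd : R.PosDef)
    (q : (Fin n → ℝ) → ℝ)
    (hq : q 0 = 0 ∧ ∀ y ≠ 0, 0 < q y)
    -- Hamiltonian and induced feedback
    (H : ((Fin n → ℝ) → ℝ) → (Fin n → ℝ) → ℝ)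
    (hH : ∀ W y, H W y = grad W y ⬝ᵥ f y + q y
      - (1/4) * (grad W y ⬝ᵥ ((g y) *ᵥ (R⁻¹ *ᵥ ((g y)ᵀ *ᵥ grad W y)))))
    (ctrl : ((Fin n → ℝ) → ℝ) → (Fin n → ℝ) → (Fin m → ℝ))
    -- the two class-P solutions
    (Vo Vhat : (Fin n → ℝ) → ℝ)
    (hVo : ContDiff ℝ 1 Vo) (hVo0 : Vo 0 = 0) (hVopos : ∀ y ≠ 0, 0 < Vo y)
    (hVhat : ContDiff ℝ 1 Vhat) (hVhat0 : Vhat 0 = 0) (hVhatpos : ∀ y ≠ 0, 0 < Vhat y)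
    (hHJBo : ∀ y, H Vo y = 0) (hHJBhat : ∀ y, H Vhat y = 0)
    -- closed-loop trajectories exist from every initial condition
    (hexist : ∀ W ∈ ({Vo, Vhat} : Set ((Fin n → ℝ) → ℝ)), ∀ x₀ : Fin n → ℝ,
      ∃ x : ℝ → (Fin n → ℝ),
        (∀ t, HasDerivAt x (f (x t) + (g (x t)) *ᵥ ctrl W (x t)) t) ∧
        x 0 = x₀ ∧ Tendsto x atTop (nhds 0))
    -- each function equals the cost of its induced policy
    (hcost : ∀ W ∈ ({Vo, Vhat} : Set ((Fin n → ℝ) → ℝ)),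
      ∀ (x₀ : Fin n → ℝ) (x : ℝ → (Fin n → ℝ)),
        (∀ t, HasDerivAt x (f (x t) + (g (x t)) *ᵥ ctrl W (x t)) t) → x 0 = x₀ →
        Tendsto x atTop (nhds 0) →
        W x₀ = ∫ t in Set.Ioi (0:ℝ),
          (q (x t) + ctrl W (x t) ⬝ᵥ (R *ᵥ ctrl W (x t)))) :
    ∀ y : Fin n → ℝ, Vo y = Vhat y := by
  have hq0 : ∀ y, 0 ≤ q y := fun y => by
    obtain rfl | hy := eq_or_ne y 0
    exacts [hq.1.ge, (hq.2 y hy).le]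
  have hle : ∀ U W, W ∈ ({Vo, Vhat} : Set ((Fin n → ℝ) → ℝ)) → ContDiff ℝ 1 U → U 0 = 0 →
      (∀ y, H U y = 0) → (∀ y ≠ 0, 0 < W y) → ∀ y, U y ≤ W y := by
    intro U W hW hU hU0 hHJB hWpos y
    obtain ⟨x, hx, rfl, hxlim⟩ := hexist W hW y
    exact le_of_hjb_of_eq_integral_cost f g q hRpd hq0 (hU.differentiable one_ne_zero) hU0
      (fun y => hH U y ▸ hHJB y) hWpos hx hxlim (hcost W hW _ x hx rfl hxlim)
  intro y
  exact le_antisymm (hle Vo Vhat (by simp) hVo hVo0 hHJBo hVhatpos y)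
    (hle Vhat Vo (by simp) hVhat hVhat0 hHJBhat hVopos y)

/-- Uniqueness of the class-`P` solution to the HJB equation: two `C¹`, positive
definite, proper solutions of `H(V) = 0`, each inducing a globally asymptotically
stable closed loop whose cost it equals, must coincide. -/
theorem hjb_class_P_solution_unique {n m : ℕ}
    (f : (Fin n → ℝ) → (Fin n → ℝ)) (hfc : Continuous f)
    (g : (Fin n → ℝ) → Matrix (Fin n) (Fin m) ℝ)
    (hgc : ∀ i j, Continuous fun y => g y i j)
    (R : Matrix (Fin m) (Fin m) ℝ) (hRsymm : R.IsSymm) (hRpd : R.PosDef)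
    (q : (Fin n → ℝ) → ℝ) (hqc : Continuous q)
    (hq : q 0 = 0 ∧ ∀ y ≠ 0, 0 < q y)
    -- Hamiltonian and induced feedback
    (H : ((Fin n → ℝ) → ℝ) → (Fin n → ℝ) → ℝ)
    (hH : ∀ W y, H W y = grad W y ⬝ᵥ f y + q y
      - (1/4) * (grad W y ⬝ᵥ ((g y) *ᵥ (R⁻¹ *ᵥ ((g y)ᵀ *ᵥ grad W y)))))
    (ctrl : ((Fin n → ℝ) → ℝ) → (Fin n → ℝ) → (Fin m → ℝ))
    (hctrl : ∀ W y, ctrl W y = (-(1/2) : ℝ) • (R⁻¹ *ᵥ ((g y)ᵀ *ᵥ grad W y)))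
    -- the two class-P solutions
    (Vo Vhat : (Fin n → ℝ) → ℝ)
    (hVo : ContDiff ℝ 1 Vo) (hVo0 : Vo 0 = 0) (hVopos : ∀ y ≠ 0, 0 < Vo y)
    (hVoproper : Tendsto Vo (cocompact (Fin n → ℝ)) atTop)
    (hVhat : ContDiff ℝ 1 Vhat) (hVhat0 : Vhat 0 = 0) (hVhatpos : ∀ y ≠ 0, 0 < Vhat y)
    (hVhatproper : Tendsto Vhat (cocompact (Fin n → ℝ)) atTop)
    (hHJBo : ∀ y, H Vo y = 0) (hHJBhat : ∀ y, H Vhat y = 0)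
    -- each induced closed loop is globally asymptotically stable
    (hGASo : GloballyAsymptoticallyStable (fun y => f y + (g y) *ᵥ ctrl Vo y))
    (hGAShat : GloballyAsymptoticallyStable (fun y => f y + (g y) *ᵥ ctrl Vhat y))
    -- closed-loop trajectories exist from every initial condition
    (hexist : ∀ W ∈ ({Vo, Vhat} : Set ((Fin n → ℝ) → ℝ)), ∀ x₀ : Fin n → ℝ,
      ∃ x : ℝ → (Fin n → ℝ),
        (∀ t, HasDerivAt x (f (x t) + (g (x t)) *ᵥ ctrl W (x t)) t) ∧
        x 0 = x₀ ∧ Tendsto x atTop (nhds 0))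
    -- each function equals the cost of its induced policy
    (hcost : ∀ W ∈ ({Vo, Vhat} : Set ((Fin n → ℝ) → ℝ)),
      ∀ (x₀ : Fin n → ℝ) (x : ℝ → (Fin n → ℝ)),
        (∀ t, HasDerivAt x (f (x t) + (g (x t)) *ᵥ ctrl W (x t)) t) → x 0 = x₀ →
        Tendsto x atTop (nhds 0) →
        W x₀ = ∫ t in Set.Ioi (0:ℝ),
          (q (x t) + ctrl W (x t) ⬝ᵥ (R *ᵥ ctrl W (x t)))) :
    ∀ y : Fin n → ℝ, Vo y = Vhat y :=
  hjb_class_P_solution_unique_general f g R hRpd q hq H hH ctrl Vo Vhat hVo hVo0 hVopos hVhat hVhat0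
    hVhatpos hHJBo hHJBhat hexist hcost
end

section
/- Monotone decrease in policy iteration: let u_i be a globally stabilizing control policy and V_i ∈ C¹ with V_i(0)=0 satisfy L(V_i, u_i)(x) = 0 for all x. Suppose V_{i-1} ∈ P satisfies L(V_{i-1}, u_i)(x) ≥ 0 for all x. Then V_i(x) ≤ V_{i-1}(x) for all x ∈ R^n. (Proof: (∇V_{i-1} - ∇V_i)ᵀ(f + g u_i) + q_i = 0 with q_i := L(V_{i-1},u_i) ≥ 0; integrating along the closed-loop trajectory from any x₀, using convergence of the state to the origin and V_{i-1}(0)=V_i(0)=0, gives V_{i-1}(x₀) - V_i(x₀) = ∫₀^∞ q_i(x(t)) dt ≥ 0.) -/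
open Matrix Filter MeasureTheory

/-! The difference `W = V_{i-1} - V_i` is a Lyapunov-type function for the closed loop: the
two policy-evaluation relations give `∇W ⬝ (f + g uᵢ) = -L(V_{i-1}, uᵢ) ≤ 0`, so `W` does not
increase along the trajectory from `x₀`, which converges to `0`; hence
`W x₀ ≥ W 0 = 0`. -/

open Topology

theorem grad_dotProduct {n : ℕ} (V : (Fin n → ℝ) → ℝ) (y v : Fin n → ℝ) :
    grad V y ⬝ᵥ v = fderiv ℝ V y v := by
  conv_rhs => rw [← Finset.univ_sum_single v, map_sum]
  refine Finset.sum_congr rfl fun i _ => ?_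
  rw [grad, mul_comm, ← smul_eq_mul, ← map_smul, ← Pi.single_smul', smul_eq_mul, mul_one]

section Lyapunov

variable {E : Type*} [NormedAddCommGroup E] [NormedSpace ℝ E]
  {W : E → ℝ} {F : E → E} {x : ℝ → E}

theorem antitone_comp_of_fderiv_apply_nonpos (hW : Differentiable ℝ W)
    (hWF : ∀ z, fderiv ℝ W z (F z) ≤ 0) (hx : ∀ t, HasDerivAt x (F (x t)) t) :
    Antitone (W ∘ x) := by
  have hderiv (t : ℝ) : HasDerivAt (W ∘ x) (fderiv ℝ W (x t) (F (x t))) t :=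
    (hW (x t)).hasFDerivAt.comp_hasDerivAt t (hx t)
  refine antitone_of_deriv_nonpos (fun t => (hderiv t).differentiableAt) fun t => ?_
  rw [(hderiv t).deriv]
  exact hWF (x t)

theorem le_comp_of_tendsto_of_fderiv_apply_nonpos {a : E} (hW : Differentiable ℝ W)
    (hWF : ∀ z, fderiv ℝ W z (F z) ≤ 0) (hx : ∀ t, HasDerivAt x (F (x t)) t)
    (hlim : Tendsto x atTop (𝓝 a)) (s : ℝ) :
    W a ≤ W (x s) :=
  (antitone_comp_of_fderiv_apply_nonpos hW hWF hx).le_of_tendsto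
    ((hW.continuous.tendsto a).comp hlim) s

end Lyapunov

theorem policy_iteration_monotone_decrease_general {n m : ℕ}
    (f : (Fin n → ℝ) → (Fin n → ℝ))
    (g : (Fin n → ℝ) → Matrix (Fin n) (Fin m) ℝ)
    (R : Matrix (Fin m) (Fin m) ℝ)
    (q : (Fin n → ℝ) → ℝ)
    -- L(V,u)(x)
    (L : ((Fin n → ℝ) → ℝ) → ((Fin n → ℝ) → (Fin m → ℝ)) → (Fin n → ℝ) → ℝ)
    (hL : ∀ V u y, L V u y
      = -(grad V y ⬝ᵥ (f y + (g y) *ᵥ u y)) - q y - u y ⬝ᵥ (R *ᵥ u y))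
    -- the policy u_i, globally stabilizing
    (ui : (Fin n → ℝ) → (Fin m → ℝ))
    -- closed-loop trajectories exist from every initial condition and converge
    (hexist : ∀ x₀ : Fin n → ℝ, ∃ x : ℝ → (Fin n → ℝ),
      (∀ t, HasDerivAt x (f (x t) + (g (x t)) *ᵥ ui (x t)) t) ∧
      x 0 = x₀ ∧ Tendsto x atTop (nhds 0))
    -- V_i solves the policy evaluation equation
    (Vi : (Fin n → ℝ) → ℝ) (hVi : ContDiff ℝ 1 Vi) (hVi0 : Vi 0 = 0)
    (heval : ∀ y, L Vi ui y = 0)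
    -- V_{i-1} ∈ P with L(V_{i-1},u_i) ≥ 0
    (Vim1 : (Fin n → ℝ) → ℝ) (hVim1 : ContDiff ℝ 1 Vim1)
    (hVim10 : Vim1 0 = 0)
    (hfeas : ∀ y, 0 ≤ L Vim1 ui y) :
    ∀ y : Fin n → ℝ, Vi y ≤ Vim1 y := by
  intro y
  obtain ⟨x, hx, rfl, hxlim⟩ := hexist y
  have hVid : Differentiable ℝ Vi := hVi.differentiable one_ne_zero
  have hVim1d : Differentiable ℝ Vim1 := hVim1.differentiable one_ne_zero
  have hdecrease (z : Fin n → ℝ) :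
      fderiv ℝ (Vim1 - Vi) z (f z + g z *ᵥ ui z) ≤ 0 := by
    have hVim1z := hfeas z
    have hViz := heval z
    rw [hL] at hVim1z hViz
    rw [fderiv_sub (hVim1d z) (hVid z), _root_.sub_apply, ← grad_dotProduct,
      ← grad_dotProduct]
    linarith
  simpa [hVim10, hVi0] using
    le_comp_of_tendsto_of_fderiv_apply_nonpos (hVim1d.sub hVid) hdecrease hx hxlim 0

/-- Monotone decrease in policy iteration: if `u_i` is globally stabilizing,
`L(V_i,u_i) ≡ 0` with `V_i(0) = 0`, and `V_{i-1} ∈ P` satisfies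
`L(V_{i-1},u_i) ≥ 0` pointwise, then `V_i ≤ V_{i-1}` on `ℝⁿ`. -/
theorem policy_iteration_monotone_decrease {n m : ℕ}
    (f : (Fin n → ℝ) → (Fin n → ℝ)) (hfc : Continuous f)
    (g : (Fin n → ℝ) → Matrix (Fin n) (Fin m) ℝ)
    (hgc : ∀ i j, Continuous fun y => g y i j)
    (R : Matrix (Fin m) (Fin m) ℝ) (hRsymm : R.IsSymm) (hRpd : R.PosDef)
    (q : (Fin n → ℝ) → ℝ) (hqc : Continuous q)
    (hq : q 0 = 0 ∧ ∀ y ≠ 0, 0 < q y)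
    -- L(V,u)(x)
    (L : ((Fin n → ℝ) → ℝ) → ((Fin n → ℝ) → (Fin m → ℝ)) → (Fin n → ℝ) → ℝ)
    (hL : ∀ V u y, L V u y
      = -(grad V y ⬝ᵥ (f y + (g y) *ᵥ u y)) - q y - u y ⬝ᵥ (R *ᵥ u y))
    -- the policy u_i, globally stabilizing
    (ui : (Fin n → ℝ) → (Fin m → ℝ))
    (hGAS : GloballyAsymptoticallyStable (fun y => f y + (g y) *ᵥ ui y))
    -- closed-loop trajectories exist from every initial condition and converge
    (hexist : ∀ x₀ : Fin n → ℝ, ∃ x : ℝ → (Fin n → ℝ),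
      (∀ t, HasDerivAt x (f (x t) + (g (x t)) *ᵥ ui (x t)) t) ∧
      x 0 = x₀ ∧ Tendsto x atTop (nhds 0))
    -- V_i solves the policy evaluation equation
    (Vi : (Fin n → ℝ) → ℝ) (hVi : ContDiff ℝ 1 Vi) (hVi0 : Vi 0 = 0)
    (heval : ∀ y, L Vi ui y = 0)
    -- V_{i-1} ∈ P with L(V_{i-1},u_i) ≥ 0
    (Vim1 : (Fin n → ℝ) → ℝ) (hVim1 : ContDiff ℝ 1 Vim1)
    (hVim10 : Vim1 0 = 0) (hVim1pos : ∀ y ≠ 0, 0 < Vim1 y)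
    (hVim1proper : Tendsto Vim1 (cocompact (Fin n → ℝ)) atTop)
    (hfeas : ∀ y, 0 ≤ L Vim1 ui y) :
    ∀ y : Fin n → ℝ, Vi y ≤ Vim1 y :=
  policy_iteration_monotone_decrease_general f g R q L hL ui hexist Vi hVi hVi0 heval Vim1 hVim1
    hVim10 hfeas
end
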